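/- Let M_Q = (q_{kα}) ∈ ℂ^{n×n} be a nonzero matrix whose columns are isotropic (Σ_{j=1}^n q_{jα}² = 0 for every α) and pairwise linearly dependent, and define Q : SO(n) → ℂ by Q(x) = Σ_{k,α} q_{kα}·x_{kα}. Then Q(x)² + 2·Σ_{1≤r<s≤n} Q(x·Y_rs)² = 0 for every x ∈ SO(n), i.e. Q² + 2·κ(Q,Q) = 0 on SO(n). -/

import Mathlib

/-!
Put `B = xᵀ M_Q`. Then `Q(x) = tr B` and `Q(x Y_rs) = (B_rs - B_sr)/√2`. As `x` is orthogonal,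
the columns of `B` are again isotropic and pairwise dependent; the latter makes the minors
`B_rr B_ss - B_rs B_sr` vanish. Hence
`∑_{r,s} (B_rs - B_sr)² = 2 ∑_{r,s} B_rs² - 2 ∑_{r,s} B_rs B_sr = 0 - 2 (tr B)²`,
and this double sum is `4 κ(Q,Q)`.
-/

open Matrix

/-- The matrix `Y_rs ∈ ℝ^{n×n}` with `(r,s)`-entry `1/√2`, `(s,r)`-entry `-1/√2` and
all other entries `0`; for `r < s` these form the canonical orthonormal basis of the
Lie algebra `so(n)`. -/
noncomputable def Yso (n : ℕ) (r s : Fin n) : Matrix (Fin n) (Fin n) ℝ :=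
  (Real.sqrt 2)⁻¹ • (Matrix.single r s 1 - Matrix.single s r 1)

/-- The special orthogonal group `SO(n) = {x : x·xᵀ = 1, det x = 1}`. -/
def SOGroup (n : ℕ) : Set (Matrix (Fin n) (Fin n) ℝ) :=
  {x | x * x.transpose = 1 ∧ x.det = 1}

open Finset

theorem two_mul_sum_ite_lt_eq_sum_of_symm {ι M : Type*} [Fintype ι] [LinearOrder ι]
    [NonAssocSemiring M]
    (f : ι → ι → M) (hsymm : ∀ r s, f r s = f s r) (hdiag : ∀ r, f r r = 0) :
    2 * ∑ r, ∑ s, (if r < s then f r s else 0) = ∑ r, ∑ s, f r s := by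
  have hsplit : ∀ r s, f r s = (if r < s then f r s else 0) + (if s < r then f s r else 0) := by
    intro r s
    rcases lt_trichotomy r s with h | rfl | h
    · simp [h, h.not_gt]
    · simp [hdiag]
    · simp [h, h.not_gt, hsymm r s]
  rw [two_mul]
  conv_rhs => rw [sum_congr rfl fun r _ => sum_congr rfl fun s _ => hsplit r s]
  simp only [sum_add_distrib]
  congr 1
  exact sum_comm

namespace Matrix

variable {m n R : Type*}

section CommRing

variable [CommRing R]

theorem sum_sq_apply_eq_transpose_mul_self [Fintype m] (M : Matrix m n R) (α : n) :
    ∑ j, M j α ^ 2 = (Mᵀ * M) α α := by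
  simp [mul_apply, sq]

theorem sum_sq_transpose_mul_apply [Fintype m] [DecidableEq m] {O : Matrix m m R}
    (hO : O * Oᵀ = 1) (q : Matrix m n R) (α : n) :
    ∑ j, (Oᵀ * q) j α ^ 2 = ∑ j, q j α ^ 2 := by
  rw [sum_sq_apply_eq_transpose_mul_self, sum_sq_apply_eq_transpose_mul_self, transpose_mul,
    transpose_transpose, Matrix.mul_assoc, ← Matrix.mul_assoc O, hO, Matrix.one_mul]

theorem sum_sum_mul_eq_trace [Fintype m] [Fintype n] (q y : Matrix m n R) :
    ∑ k, ∑ α, q k α * y k α = trace (yᵀ * q) := by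
  rw [trace, sum_comm]
  simp [mul_apply, mul_comm]

theorem sum_sum_sub_sq_eq_neg_two_mul_trace_sq [Fintype n] {B : Matrix n n R}
    (hiso : ∀ α, ∑ j, B j α ^ 2 = 0)
    (hminor : ∀ r s, B r r * B s s = B r s * B s r) :
    ∑ r, ∑ s, (B r s - B s r) ^ 2 = -2 * trace B ^ 2 := by
  have hcols : ∑ r, ∑ s, B r s ^ 2 = 0 := by
    rw [sum_comm]; exact sum_eq_zero fun α _ => hiso α
  have hrows : ∑ r, ∑ s, B s r ^ 2 = 0 := sum_eq_zero fun α _ => hiso α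
  have hcross : ∑ r, ∑ s, B r s * B s r = trace B ^ 2 := by
    rw [trace, sq, sum_mul_sum]
    exact sum_congr rfl fun r _ => sum_congr rfl fun s _ => (hminor r s).symm
  simp_rw [sub_sq, sum_add_distrib, sum_sub_distrib, mul_assoc, ← mul_sum, hcols, hrows, hcross]
  ring

def ColumnsDependent (q : Matrix m n R) (α β : n) : Prop :=
  ∃ c d : R, (c ≠ 0 ∨ d ≠ 0) ∧ ∀ j, c * q j α + d * q j β = 0

theorem ColumnsDependent.mul_left {l : Type*} [Fintype m] {q : Matrix m n R} {α β : n}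
    (h : ColumnsDependent q α β) (A : Matrix l m R) : ColumnsDependent (A * q) α β := by
  obtain ⟨c, d, hcd, h⟩ := h
  refine ⟨c, d, hcd, fun j => ?_⟩
  simp only [mul_apply, mul_sum, ← sum_add_distrib]
  refine sum_eq_zero fun k _ => ?_
  linear_combination A j k * h k

theorem ColumnsDependent.mul_eq_mul [NoZeroDivisors R] {q : Matrix m n R} {α β : n}
    (h : ColumnsDependent q α β) (i j : m) : q i α * q j β = q i β * q j α := by
  obtain ⟨c, d, hc | hd, h⟩ := h
  · apply mul_left_cancel₀ hc
    linear_combination q j β * h i - q i β * h j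
  · apply mul_left_cancel₀ hd
    linear_combination q i α * h j - q j α * h i

end CommRing

end Matrix

theorem trace_Yso_transpose_mul_sq {n : ℕ} (B : Matrix (Fin n) (Fin n) ℂ) (r s : Fin n) :
    trace (((Yso n r s).map (↑))ᵀ * B) ^ 2 = (B r s - B s r) ^ 2 / 2 := by
  have hY : (Yso n r s).map ((↑) : ℝ → ℂ) =
      ((Real.sqrt 2 : ℝ) : ℂ)⁻¹ • (single r s 1 - single s r 1) := by
    ext i j
    simp only [Yso, map_apply, Matrix.smul_apply, Matrix.sub_apply, single_apply, smul_eq_mul]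
    split_ifs <;> simp
  have hsqrt : ((Real.sqrt 2 : ℝ) : ℂ) ^ 2 = 2 := by
    rw [← Complex.ofReal_pow, Real.sq_sqrt zero_le_two]; norm_num
  rw [hY, transpose_smul, transpose_sub, transpose_single, transpose_single, smul_mul, trace_smul,
    Matrix.sub_mul, trace_sub, trace_single_mul, trace_single_mul, smul_eq_mul, mul_pow, inv_pow,
    hsqrt]
  simp only [smul_eq_mul, one_mul]
  ring

theorem stmt_16_general (n : ℕ) (q : Matrix (Fin n) (Fin n) ℂ)
    (hiso : ∀ α : Fin n, ∑ j : Fin n, (q j α) ^ 2 = 0)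
    (hdep : ∀ α β : Fin n, ∃ c d : ℂ, (c ≠ 0 ∨ d ≠ 0) ∧
      ∀ j : Fin n, c * q j α + d * q j β = 0)
    (Q : Matrix (Fin n) (Fin n) ℝ → ℂ)
    (hQdef : Q = fun x => ∑ k : Fin n, ∑ α : Fin n, q k α * (x k α : ℂ)) :
    ∀ x ∈ SOGroup n,
      (Q x) ^ 2 + 2 * (∑ r : Fin n, ∑ s : Fin n,
        if r < s then (Q (x * Yso n r s)) ^ 2 else 0) = 0 := by
  rintro x ⟨hx, -⟩
  have hQ : ∀ y, Q y = trace ((y.map (↑))ᵀ * q) := fun y => by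
    rw [hQdef, ← sum_sum_mul_eq_trace]; rfl
  set xc := x.map ((↑) : ℝ → ℂ)
  have hxc : xc * xcᵀ = 1 := by
    have := congrArg Complex.ofRealHom.mapMatrix hx
    rw [map_mul, map_one] at this
    rw [← transpose_map]
    exact this
  set B := xcᵀ * q
  have hQY : ∀ r s, Q (x * Yso n r s) ^ 2 = (B r s - B s r) ^ 2 / 2 := fun r s => by
    rw [hQ, show (x * Yso n r s).map ((↑) : ℝ → ℂ) = xc * (Yso n r s).map (↑) from
      Matrix.map_mul (f := Complex.ofRealHom), transpose_mul, Matrix.mul_assoc,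
      trace_Yso_transpose_mul_sq]
  have hBiso : ∀ α, ∑ j, B j α ^ 2 = 0 := fun α =>
    (sum_sq_transpose_mul_apply hxc q α).trans (hiso α)
  have hBminor : ∀ r s, B r r * B s s = B r s * B s r := fun r s =>
    (ColumnsDependent.mul_left (hdep r s) xcᵀ).mul_eq_mul r s
  simp_rw [hQY]
  rw [two_mul_sum_ite_lt_eq_sum_of_symm _ (fun r s => by ring) (fun r => by simp), hQ x]
  simp_rw [← sum_div]
  rw [sum_sum_sub_sq_eq_neg_two_mul_trace_sq hBiso hBminor]
  ring

/-- Lemma 9.2 (sufficiency): if the nonzero matrix `M_Q = (q_{kα})` has isotropic and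
pairwise linearly dependent columns, then `Q(x) = Σ q_{kα} x_{kα}` satisfies
`Q² + 2κ(Q,Q) = 0` on `SO(n)`. -/
theorem stmt_16 (n : ℕ) (hn : 2 ≤ n) (q : Matrix (Fin n) (Fin n) ℂ) (hq : q ≠ 0)
    (hiso : ∀ α : Fin n, ∑ j : Fin n, (q j α) ^ 2 = 0)
    (hdep : ∀ α β : Fin n, ∃ c d : ℂ, (c ≠ 0 ∨ d ≠ 0) ∧
      ∀ j : Fin n, c * q j α + d * q j β = 0)
    (Q : Matrix (Fin n) (Fin n) ℝ → ℂ)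
    (hQdef : Q = fun x => ∑ k : Fin n, ∑ α : Fin n, q k α * (x k α : ℂ)) :
    ∀ x ∈ SOGroup n,
      (Q x) ^ 2 + 2 * (∑ r : Fin n, ∑ s : Fin n,
        if r < s then (Q (x * Yso n r s)) ^ 2 else 0) = 0 :=
  stmt_16_general n q hiso hdep Q hQdef
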